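/- Let m, k be positive integers, let v_1,…,v_N ∈ R^m be nonzero (N > m), and suppose {v_1,…,v_m} is a basis of R^m and v_N ∈ span{v_1,…,v_m} = R^m. Let γ > 0. Then there is a finite constant C, depending only on v_1,…,v_m, v_N, γ, and m, such that for all nonnegative measurable functions f_1,…,f_N on R^k, Λ(f_1,…,f_N) ≤ C Σ_{j=1}^m Λ(f_1,…,f_{j−1}, |·|^{γ} f_j, f_{j+1},…,f_{N−1}, |·|^{−γ} f_N), where |·|^{μ} f denotes the function y ↦ |y|^{μ} f(y) on R^k. -/

import Mathlib

open MeasureTheory ENNReal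
open scoped Classical

/-- The dot product `v · x ∈ ℝᵏ` for `v ∈ ℝᵐ` and `x ∈ (ℝᵏ)ᵐ`. -/
noncomputable def dotv {m k : ℕ} (v : Fin m → ℝ)
    (x : Fin m → EuclideanSpace ℝ (Fin k)) : EuclideanSpace ℝ (Fin k) :=
  ∑ i, v i • x i

/-- The Brascamp–Lieb form `Λ(f₁,…,f_N) = ∫ ∏ f_j(v_j · x) dx`. -/
noncomputable def BLform {m k N : ℕ} (v : Fin N → Fin m → ℝ)
    (f : Fin N → EuclideanSpace ℝ (Fin k) → ℝ≥0∞) : ℝ≥0∞ :=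
  ∫⁻ x : Fin m → EuclideanSpace ℝ (Fin k), ∏ j, f j (dotv (v j) x)

/-- The weighted norm `‖f‖_{L^p_α} = ‖ |·|^α f ‖_{L^p}`. -/
noncomputable def wnorm {k : ℕ} (p α : ℝ)
    (f : EuclideanSpace ℝ (Fin k) → ℝ≥0∞) : ℝ≥0∞ :=
  (∫⁻ y : EuclideanSpace ℝ (Fin k), ((‖y‖₊ : ℝ≥0∞) ^ α * f y) ^ p) ^ (1 / p)

/-- A family of vectors in `ℝᵐ` is generic if every subfamily of cardinality `m`
is a basis of `ℝᵐ`. -/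
def IsGeneric {m N : ℕ} (v : Fin N → Fin m → ℝ) : Prop :=
  ∀ s : Finset (Fin N), s.card = m →
    LinearIndependent ℝ (fun i : s => v i.1) ∧
      Submodule.span ℝ (v '' ↑s) = ⊤


/-!
Write `v_N = ∑ⱼ cⱼ vⱼ` and put `S = ∑ⱼ |cⱼ|`. Then `|v_N · x| ≤ S · maxⱼ |vⱼ · x|`, so
wherever `v_N · x ≠ 0`, that is almost everywhere, some `j` satisfies
`1 ≤ S^γ |vⱼ · x|^γ |v_N · x|^{-γ}`. Hence the integrand of `Λ` is a.e. at most
`S^γ ∑ⱼ |vⱼ · x|^γ |v_N · x|^{-γ}` times itself, and the `j`-th term of this sum integrates to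
the `j`-th form on the right: the estimate holds with `C = S^γ`.
-/

namespace ENNReal

theorem one_le_rpow_mul_rpow_neg_of_le {b c : ℝ≥0∞} (hb₀ : b ≠ 0) (hb : b ≠ ⊤) (hbc : b ≤ c)
    {γ : ℝ} (hγ : 0 ≤ γ) : 1 ≤ c ^ γ * b ^ (-γ) := by
  rw [rpow_neg, ← div_eq_mul_inv, ENNReal.le_div_iff_mul_le
    (.inl (rpow_pos_of_nonneg (pos_iff_ne_zero.2 hb₀) hγ).ne') (.inl (rpow_ne_top_of_nonneg hγ hb)),
    one_mul]
  exact rpow_le_rpow hbc hγ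

end ENNReal

theorem Finset.prod_ite_mul_ite_mul {ι M : Type*} [Fintype ι] [DecidableEq ι] [CommMonoid M]
    {a b : ι} (hab : a ≠ b) (u w : M) (F : ι → M) :
    ∏ i, (if i = a then u * F i else if i = b then w * F i else F i) = u * w * ∏ i, F i := by
  have hite : ∀ i, (if i = a then u * F i else if i = b then w * F i else F i) =
      (if i = a then u else 1) * (if i = b then w else 1) * F i := by
    intro i
    by_cases ha : i = a
    · subst ha; simp [hab]
    · by_cases hb : i = b
      · subst hb; simp [hab.symm]
      · simp [ha, hb]
  simp only [hite, Finset.prod_mul_distrib, Finset.prod_ite_eq', Finset.mem_univ, if_true]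

theorem exists_one_le_rpow_mul_rpow_neg_norm_sum {ι E : Type*} [Fintype ι]
    [NormedAddCommGroup E] [NormedSpace ℝ E] {c : ι → ℝ} {y : ι → E}
    (hy : ∑ i, c i • y i ≠ 0) {γ : ℝ} (hγ : 0 ≤ γ) :
    ∃ j, 1 ≤ ENNReal.ofReal (∑ i, |c i|) ^ γ *
      ((‖y j‖₊ : ℝ≥0∞) ^ γ * (‖∑ i, c i • y i‖₊ : ℝ≥0∞) ^ (-γ)) := by
  have : Nonempty ι := by
    by_contra h
    exact hy (by simp [not_nonempty_iff.1 h])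
  obtain ⟨j, hj⟩ := Finite.exists_max fun i => ‖y i‖
  have hsum : ‖∑ i, c i • y i‖ ≤ (∑ i, |c i|) * ‖y j‖ := by
    rw [Finset.sum_mul]
    refine norm_sum_le_of_le _ fun i _ => ?_
    rw [norm_smul, Real.norm_eq_abs]
    exact mul_le_mul_of_nonneg_left (hj i) (abs_nonneg _)
  refine ⟨j, ?_⟩
  rw [← mul_assoc, ← mul_rpow_of_nonneg _ _ hγ]
  refine one_le_rpow_mul_rpow_neg_of_le (by simpa using hy) coe_ne_top ?_ hγ
  rw [← enorm_eq_nnnorm, ← ofReal_norm, ← enorm_eq_nnnorm, ← ofReal_norm,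
    ← ofReal_mul (Finset.sum_nonneg fun i _ => abs_nonneg _)]
  exact ofReal_le_ofReal hsum

section dotv

variable {m k : ℕ}

theorem dotv_sum_smul {ι : Type*} [Fintype ι] (c : ι → ℝ) (u : ι → Fin m → ℝ)
    (x : Fin m → EuclideanSpace ℝ (Fin k)) :
    dotv (∑ j, c j • u j) x = ∑ j, c j • dotv (u j) x := by
  simp only [dotv, Finset.sum_apply, Pi.smul_apply, smul_eq_mul, Finset.sum_smul,
    Finset.smul_sum, mul_smul]
  exact Finset.sum_comm

theorem dotv_single (v : Fin m → ℝ) (i : Fin m) (u : EuclideanSpace ℝ (Fin k)) :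
    dotv v (Pi.single i u) = v i • u := by
  simp [dotv, Pi.single_apply]

@[simps]
noncomputable def dotvLinearMap (v : Fin m → ℝ) :
    (Fin m → EuclideanSpace ℝ (Fin k)) →ₗ[ℝ] EuclideanSpace ℝ (Fin k) where
  toFun := dotv v
  map_add' x y := by simp [dotv, smul_add, Finset.sum_add_distrib]
  map_smul' r x := by simp [dotv, Finset.smul_sum, smul_comm r]

@[fun_prop]
theorem measurable_dotv (v : Fin m → ℝ) :
    Measurable (dotv v : (Fin m → EuclideanSpace ℝ (Fin k)) → EuclideanSpace ℝ (Fin k)) :=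
  (dotvLinearMap v).continuous_of_finiteDimensional.measurable

theorem ae_dotv_ne_zero (hk : 0 < k) {v : Fin m → ℝ} (hv : v ≠ 0) :
    ∀ᵐ x : Fin m → EuclideanSpace ℝ (Fin k), dotv v x ≠ 0 := by
  have : NeZero k := ⟨hk.ne'⟩
  obtain ⟨i, hi⟩ := Function.ne_iff.1 hv
  obtain ⟨u, hu⟩ := exists_ne (0 : EuclideanSpace ℝ (Fin k))
  have hker : LinearMap.ker (dotvLinearMap (k := k) v) ≠ ⊤ := by
    refine fun htop => smul_ne_zero hi hu ?_
    have hmem : Pi.single i u ∈ LinearMap.ker (dotvLinearMap v) := htop ▸ Submodule.mem_top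
    rwa [LinearMap.mem_ker, dotvLinearMap_apply, dotv_single] at hmem
  refine ae_iff.2 <| measure_mono_null (fun x (hx : ¬dotv v x ≠ 0) => ?_)
    (Measure.addHaar_submodule volume _ hker)
  exact LinearMap.mem_ker.2 (not_not.1 hx)

theorem BLform_ite_mul_ite_mul {N : ℕ} (v : Fin N → Fin m → ℝ)
    (f : Fin N → EuclideanSpace ℝ (Fin k) → ℝ≥0∞) {a b : Fin N} (hab : a ≠ b)
    (φ ψ : EuclideanSpace ℝ (Fin k) → ℝ≥0∞) :
    BLform v (fun i => if i = a then fun y => φ y * f i y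
      else if i = b then fun y => ψ y * f i y else f i) =
      ∫⁻ x, φ (dotv (v a) x) * ψ (dotv (v b) x) * ∏ i, f i (dotv (v i) x) := by
  refine lintegral_congr fun x => ?_
  rw [← Finset.prod_ite_mul_ite_mul hab]
  refine Finset.prod_congr rfl fun i _ => ?_
  split_ifs with ha hb <;> simp [*, hab.symm]

end dotv

/-- The spreading estimate: if `{v_1,…,v_m}` is a basis of `ℝᵐ` and `γ > 0`, the form
is controlled by the sum of the forms in which the weight `|·|^γ` is moved from the
last function onto one of the first `m` functions. -/
theorem spreading (m k N : ℕ) (hk : 0 < k) (hmN : m ≤ N)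
    (v : Fin (N + 1) → Fin m → ℝ) (hv0 : ∀ i, v i ≠ 0)
    (hlast : v (Fin.last N) ∈ Submodule.span ℝ
      (Set.range (fun i : Fin m => v (Fin.castLE (by omega) i))))
    (γ : ℝ) (hγ : 0 < γ) :
    ∃ C : ℝ≥0∞, C ≠ ⊤ ∧
      ∀ f : Fin (N + 1) → EuclideanSpace ℝ (Fin k) → ℝ≥0∞, (∀ i, Measurable (f i)) →
        BLform v f ≤ C * ∑ j : Fin m,
          BLform v (fun i =>
            if i = Fin.castLE (by omega) j then
              fun y => (‖y‖₊ : ℝ≥0∞) ^ γ * f i y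
            else if i = Fin.last N then
              fun y => (‖y‖₊ : ℝ≥0∞) ^ (-γ) * f i y
            else f i) := by
  obtain ⟨c, hc⟩ := (Submodule.mem_span_range_iff_exists_fun ℝ).1 hlast
  have hC : ENNReal.ofReal (∑ j, |c j|) ^ γ ≠ ⊤ := rpow_ne_top_of_nonneg hγ.le ofReal_ne_top
  refine ⟨_, hC, fun f hf => ?_⟩
  have hne : ∀ j : Fin m, Fin.castLE (Nat.le_succ_of_le hmN) j ≠ Fin.last N :=
    fun j => Fin.ne_of_val_ne (by simp only [Fin.val_castLE, Fin.val_last]; omega)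
  simp only [BLform_ite_mul_ite_mul v f (hne _)]
  rw [← lintegral_finsetSum _ fun j _ => by fun_prop, ← lintegral_const_mul' _ _ hC]
  refine lintegral_mono_ae ?_
  filter_upwards [ae_dotv_ne_zero hk (hv0 (Fin.last N))] with x hx
  rw [← hc, dotv_sum_smul] at hx
  obtain ⟨j, hj⟩ := exists_one_le_rpow_mul_rpow_neg_norm_sum hx hγ.le
  rw [← dotv_sum_smul, hc] at hj
  calc ∏ i, f i (dotv (v i) x)
      ≤ _ * ∏ i, f i (dotv (v i) x) := le_mul_of_one_le_left' hj
    _ ≤ _ := by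
      rw [mul_assoc]
      gcongr
      exact Finset.single_le_sum_of_canonicallyOrdered (M := ℝ≥0∞) (Finset.mem_univ j)
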